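/- arXiv:1705.01527 — 2 statements merged into one kernel-verified Lean document; each statement's English description precedes it below -/
import Mathlib

section
/- Fix indices i, j with m_i + m_j ≤ d, and fix v ∈ ℂ^n. Then there exists a polynomial S with complex coefficients in one variable, of degree at most 2k_0 − d, such that for every ζ ∈ ℂ with |ζ| = 1, ζ^{k_0} · P_{z_i z_j}(h^v(ζ), \overline{h^v(ζ)}) = (1 − ζ)^{d − m_i − m_j} · S(ζ). -/
/-!
Each monomial `z^J w^K` of `P_{z_i z_j}` has weighted degree `A + B = d - m_i - m_j`, where
`B = M·K` and `d - k₀ ≤ B ≤ k₀` are inherited from `P`. On the unit circle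
`ζ (1 - conj ζ) = -(1 - ζ)`, so along `(h^v(ζ), conj (h^v(ζ)))` the monomial becomes
`(1 - ζ)^(A + B)` times a constant times `ζ^(-B)`; multiplying by `ζ^k₀` leaves `ζ^(k₀ - B)`,
of degree at most `k₀ - (d - k₀) = 2k₀ - d`.
-/

open MvPolynomial ComplexConjugate

namespace MvPolynomial

theorem add_single_mem_support_of_mem_support_pderiv {R σ : Type*} [CommSemiring R]
    [DecidableEq σ] {p : MvPolynomial σ R} {a : σ} {E : σ →₀ ℕ}
    (hE : E ∈ (pderiv a p).support) : E + Finsupp.single a 1 ∈ p.support := by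
  rw [mem_support_iff, coeff_pderiv] at hE
  exact mem_support_iff.mpr (left_ne_zero_of_mul hE)

end MvPolynomial

theorem Finset.prod_pow_mul_pow {ι M : Type*} [CommMonoid M] (s : Finset ι) (a : M)
    (m E : ι → ℕ) (x : ι → M) :
    ∏ l ∈ s, (a ^ m l * x l) ^ E l = a ^ (∑ l ∈ s, m l * E l) * ∏ l ∈ s, x l ^ E l := by
  simp only [mul_pow, ← pow_mul, Finset.prod_mul_distrib, Finset.prod_pow_eq_pow_sum]

section WeightedBidegree

variable {ι : Type*} [Fintype ι] (m : ι → ℕ)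

-- `Sum.inl l` is the variable `z_l` and `Sum.inr l` is `w_l`, which stands for `conj z_l`.
def holWeight (E : (ι ⊕ ι) →₀ ℕ) : ℕ := ∑ l, m l * E (Sum.inl l)

def antiholWeight (E : (ι ⊕ ι) →₀ ℕ) : ℕ := ∑ l, m l * E (Sum.inr l)

theorem holWeight_add_single_inl (E : (ι ⊕ ι) →₀ ℕ) (i : ι) :
    holWeight m (E + Finsupp.single (Sum.inl i) 1) = holWeight m E + m i := by
  classical
  simp [holWeight, Finsupp.single_apply, mul_add, Finset.sum_add_distrib]

theorem antiholWeight_add_single_inl (E : (ι ⊕ ι) →₀ ℕ) (i : ι) :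
    antiholWeight m (E + Finsupp.single (Sum.inl i) 1) = antiholWeight m E := by
  simp [antiholWeight]

def HasWeightBounds {R : Type*} [CommSemiring R] (e lo hi : ℕ) (Q : MvPolynomial (ι ⊕ ι) R) :
    Prop :=
  ∀ E ∈ Q.support, holWeight m E + antiholWeight m E = e ∧
    lo ≤ antiholWeight m E ∧ antiholWeight m E ≤ hi

variable {m}

theorem HasWeightBounds.pderiv_inl {R : Type*} [CommSemiring R] [DecidableEq ι]
    {e lo hi : ℕ} {Q : MvPolynomial (ι ⊕ ι) R} (hQ : HasWeightBounds m e lo hi Q) (i : ι) :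
    HasWeightBounds m (e - m i) lo hi (pderiv (Sum.inl i) Q) := by
  intro E hE
  have := hQ _ (add_single_mem_support_of_mem_support_pderiv hE)
  rw [holWeight_add_single_inl, antiholWeight_add_single_inl] at this
  omega

end WeightedBidegree

section UnitCircle

variable {ι : Type*} [Fintype ι] (m : ι → ℕ) (v : ι → ℂ)

-- The paper's `(h^v(ζ), conj (h^v(ζ)))`.
def hCurvePair (ζ : ℂ) : ι ⊕ ι → ℂ :=
  Sum.elim (fun l => (1 - ζ) ^ m l * v l) (fun l => (1 - conj ζ) ^ m l * conj (v l))

/-- The constant `c` with `z^J w^K = c (1 - ζ)^(A + B) ζ^(-B)` along `hCurvePair m v` on the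
unit circle. -/
def hCurveCoeff (E : (ι ⊕ ι) →₀ ℕ) : ℂ :=
  (-1) ^ antiholWeight m E * (∏ l, v l ^ E (Sum.inl l)) * ∏ l, conj (v l) ^ E (Sum.inr l)

theorem mul_one_sub_conj_of_norm_eq_one {ζ : ℂ} (hζ : ‖ζ‖ = 1) : ζ * (1 - conj ζ) = -(1 - ζ) := by
  have h : ζ * conj ζ = 1 := by
    rw [Complex.mul_conj, Complex.normSq_eq_norm_sq, hζ]; norm_num
  linear_combination -h

theorem pow_mul_prod_hCurvePair_pow {ζ : ℂ} (hζ : ‖ζ‖ = 1) (E : (ι ⊕ ι) →₀ ℕ) {k : ℕ}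
    (hk : antiholWeight m E ≤ k) :
    ζ ^ k * ∏ s, hCurvePair m v ζ s ^ E s =
      (1 - ζ) ^ (holWeight m E + antiholWeight m E) * hCurveCoeff m v E *
        ζ ^ (k - antiholWeight m E) := by
  have hk : ζ ^ k = ζ ^ (k - antiholWeight m E) * ζ ^ antiholWeight m E := by
    rw [← pow_add, Nat.sub_add_cancel hk]
  have hB : ζ ^ antiholWeight m E * (1 - conj ζ) ^ antiholWeight m E =
      (-1) ^ antiholWeight m E * (1 - ζ) ^ antiholWeight m E := by
    rw [← mul_pow, mul_one_sub_conj_of_norm_eq_one hζ, neg_eq_neg_one_mul, mul_pow]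
  simp only [Fintype.prod_sum_type, hCurvePair, Sum.elim_inl, Sum.elim_inr,
    Finset.prod_pow_mul_pow]
  rw [← holWeight, ← antiholWeight, hk, hCurveCoeff, pow_add]
  linear_combination (ζ ^ (k - antiholWeight m E) * (1 - ζ) ^ holWeight m E *
    (∏ l, v l ^ E (Sum.inl l)) * ∏ l, conj (v l) ^ E (Sum.inr l)) * hB

theorem exists_polynomial_pow_mul_eval_hCurvePair {e lo k : ℕ} {Q : MvPolynomial (ι ⊕ ι) ℂ}
    (hQ : HasWeightBounds m e lo k Q) :
    ∃ S : Polynomial ℂ, S.natDegree ≤ k - lo ∧ ∀ ζ : ℂ, ‖ζ‖ = 1 →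
      ζ ^ k * eval (hCurvePair m v ζ) Q = (1 - ζ) ^ e * S.eval ζ := by
  refine ⟨∑ E ∈ Q.support, Polynomial.C (coeff E Q * hCurveCoeff m v E) *
      Polynomial.X ^ (k - antiholWeight m E), ?_, fun ζ hζ => ?_⟩
  · refine Polynomial.natDegree_sum_le_of_forall_le _ _ fun E hE => ?_
    have := hQ E hE
    exact (Polynomial.natDegree_C_mul_X_pow_le _ _).trans (by omega)
  · rw [eval_eq', Finset.mul_sum, Polynomial.eval_finsetSum, Finset.mul_sum]
    refine Finset.sum_congr rfl fun E hE => ?_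
    obtain ⟨he, -, hk⟩ := hQ E hE
    rw [mul_left_comm, pow_mul_prod_hCurvePair_pow m v hζ E hk, he]
    simp only [Polynomial.eval_mul, Polynomial.eval_C, Polynomial.eval_pow, Polynomial.eval_X]
    ring

end UnitCircle

theorem stmt2_general (n : ℕ) (m : Fin n → ℕ)
    (d k0 : ℕ)
    (P : MvPolynomial (Fin n ⊕ Fin n) ℂ)
    (hP : ∀ J ∈ P.support,
      ((∑ i, m i * J (Sum.inl i)) + (∑ i, m i * J (Sum.inr i)) = d ∧
        d - k0 ≤ ∑ i, m i * J (Sum.inr i) ∧ (∑ i, m i * J (Sum.inr i)) ≤ k0))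
    (i j : Fin n) (v : Fin n → ℂ) :
    ∃ S : Polynomial ℂ, S.natDegree ≤ 2 * k0 - d ∧
      ∀ ζ : ℂ, ‖ζ‖ = 1 →
        ζ ^ k0 * eval (Sum.elim (fun l => (1 - ζ) ^ m l * v l)
            (fun l => (1 - conj ζ) ^ m l * conj (v l)))
            (pderiv (Sum.inl i) (pderiv (Sum.inl j) P)) =
          (1 - ζ) ^ (d - m i - m j) * S.eval ζ := by
  have hP : HasWeightBounds m d (d - k0) k0 P := hP
  have hQ : HasWeightBounds m (d - m i - m j) (d - k0) k0
      (pderiv (Sum.inl i) (pderiv (Sum.inl j) P)) := by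
    rw [Nat.sub_right_comm]
    exact (hP.pderiv_inl j).pderiv_inl i
  obtain ⟨S, hdeg, hS⟩ := exists_polynomial_pow_mul_eval_hCurvePair m v hQ
  exact ⟨S, hdeg.trans (by omega), hS⟩

/-- there is a one-variable polynomial `S` of degree at most `2k₀ - d` with
`ζ^k₀ · P_{z_i z_j}(h^v(ζ), conj (h^v(ζ))) = (1-ζ)^(d - m_i - m_j) · S(ζ)` on the unit
circle. -/
theorem stmt2 (n : ℕ) (hn : 1 ≤ n) (m : Fin n → ℕ) (hm : ∀ i, 0 < m i)
    (d k0 : ℕ) (hdk0 : d ≤ 2 * k0) (hk0d : k0 < d)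
    (P : MvPolynomial (Fin n ⊕ Fin n) ℂ)
    (hP : ∀ J ∈ P.support,
      ((∑ i, m i * J (Sum.inl i)) + (∑ i, m i * J (Sum.inr i)) = d ∧
        d - k0 ≤ ∑ i, m i * J (Sum.inr i) ∧ (∑ i, m i * J (Sum.inr i)) ≤ k0))
    (i j : Fin n) (hij : m i + m j ≤ d) (v : Fin n → ℂ) :
    ∃ S : Polynomial ℂ, S.natDegree ≤ 2 * k0 - d ∧
      ∀ ζ : ℂ, ‖ζ‖ = 1 →
        ζ ^ k0 * eval (Sum.elim (fun l => (1 - ζ) ^ m l * v l)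
            (fun l => (1 - conj ζ) ^ m l * conj (v l)))
            (pderiv (Sum.inl i) (pderiv (Sum.inl j) P)) =
          (1 - ζ) ^ (d - m i - m j) * S.eval ζ :=
  stmt2_general n m d k0 P hP i j v
end

section
/- Assume m_i + m_j ≤ d for all indices i, j, and fix v ∈ ℂ^n. Then for every ζ ∈ ℂ with |ζ| = 1 and ζ ≠ 1, the determinant of the n × n matrix whose (i,j) entry is ζ^{k_0} · P_{z_i w_j}(v, (−ζ^{−1})^M \overline{v}) vanishes if and only if the determinant of the n × n matrix whose (i,j) entry is P_{z_i w_j}(h^v(ζ), \overline{h^v(ζ)}) vanishes. That is, away from ζ = 1 the zeros on the unit circle of the function Q^v are exactly the points where the disc h^v passes through Levi-degenerate points of the model hypersurface. -/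
open MvPolynomial ComplexConjugate

/-!
On the unit circle `1 - conj ζ = (1 - ζ) · (-ζ⁻¹)`, so `(h^v(ζ), conj h^v(ζ))` is the point
`(v, (-ζ⁻¹)^M conj v)` rescaled by `1 - ζ` in the weights `(M, M)`. Since `P_{z_i w_j}` is weighted
homogeneous of degree `d - m_i - m_j`, the Levi matrix along the disc is the matrix of `Q^v`
(without the factor `ζ^k₀`) with entries multiplied by `(1 - ζ)^(d - m_i - m_j)`. Conjugating by
the diagonal matrix `((1 - ζ)^{m_i})` turns this into `(1 - ζ)^d` times that matrix, and all these
factors are nonzero because `ζ ≠ 0, 1`.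
-/

lemma Finsupp.weight_sumElim {ι : Type*} [Fintype ι] (m : ι → ℕ) (J : ι ⊕ ι →₀ ℕ) :
    Finsupp.weight (Sum.elim m m) J = ∑ i, m i * J (Sum.inl i) + ∑ i, m i * J (Sum.inr i) := by
  rw [Finsupp.weight_apply, Finsupp.sum_fintype _ _ (by simp), Fintype.sum_sum_type]
  simp only [Sum.elim_inl, Sum.elim_inr, smul_eq_mul, mul_comm]

namespace MvPolynomial

variable {R σ : Type*} [CommSemiring R]

lemma IsWeightedHomogeneous.eval_pow_weight_mul {w : σ → ℕ} {N : ℕ} {φ : MvPolynomial σ R}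
    (h : φ.IsWeightedHomogeneous w N) (u : R) (e : σ → R) :
    eval (fun s => u ^ w s * e s) φ = u ^ N * eval e φ := by
  conv_lhs => rw [φ.as_sum]
  conv_rhs => rw [φ.as_sum]
  simp only [map_sum, eval_monomial, Finset.mul_sum]
  refine Finset.sum_congr rfl fun J hJ => ?_
  have hN : J.sum (fun s k => w s * k) = N := by
    rw [← h (mem_support_iff.mp hJ), Finsupp.weight_apply]
    simp only [smul_eq_mul, mul_comm]
  simp only [mul_pow, Finsupp.prod_mul, ← pow_mul]
  rw [Finsupp.prod, Finset.prod_pow_eq_pow_sum, ← Finsupp.sum, hN]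
  ring

end MvPolynomial

namespace Matrix

variable {ι K : Type*} [Fintype ι] [DecidableEq ι] [Field K]

lemma det_of_pow_tsub_mul_eq_zero_iff {u : K} (hu : u ≠ 0) {a : ι → ℕ} {N : ℕ}
    (ha : ∀ i j, a i + a j ≤ N) (A : Matrix ι ι K) :
    (of fun i j => u ^ (N - a j - a i) * A i j).det = 0 ↔ A.det = 0 := by
  set D : Matrix ι ι K := diagonal fun i => u ^ a i
  have hscaled : D * (of fun i j => u ^ (N - a j - a i) * A i j) * D = u ^ N • A := by
    ext i j
    rw [mul_diagonal, diagonal_mul, of_apply, smul_apply, smul_eq_mul, ← mul_assoc, mul_right_comm, ← pow_add, ← pow_add]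
    congr 2
    have := ha i j
    omega
  have hD : D.det ≠ 0 := by
    rw [det_diagonal]
    exact Finset.prod_ne_zero_iff.mpr fun i _ => pow_ne_zero _ hu
  have hdet := congrArg det hscaled
  rw [det_mul, det_mul, det_smul] at hdet
  constructor
  · intro h
    rw [h, mul_zero, zero_mul] at hdet
    exact (mul_eq_zero.mp hdet.symm).resolve_left (pow_ne_zero _ (pow_ne_zero _ hu))
  · intro h
    rw [h, mul_zero] at hdet
    simpa [hD] using hdet

end Matrix

lemma Complex.one_sub_conj_eq_of_norm_eq_one {ζ : ℂ} (hζ : ‖ζ‖ = 1) :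
    1 - conj ζ = (1 - ζ) * -ζ⁻¹ := by
  have hζ0 : ζ ≠ 0 := norm_ne_zero_iff.mp (by rw [hζ]; exact one_ne_zero)
  rw [← Complex.inv_eq_conj hζ]
  field_simp
  ring

theorem stmt14_general (n : ℕ) (m : Fin n → ℕ)
    (d k0 : ℕ)
    (P : MvPolynomial (Fin n ⊕ Fin n) ℂ)
    (hP : ∀ J ∈ P.support,
      ((∑ i, m i * J (Sum.inl i)) + (∑ i, m i * J (Sum.inr i)) = d ∧
        d - k0 ≤ ∑ i, m i * J (Sum.inr i) ∧ (∑ i, m i * J (Sum.inr i)) ≤ k0))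
    (hmd : ∀ i j : Fin n, m i + m j ≤ d) (v : Fin n → ℂ)
    (ζ : ℂ) (hζ : ‖ζ‖ = 1) (hζ1 : ζ ≠ 1) :
    (Matrix.of fun i j : Fin n =>
        ζ ^ k0 * eval (Sum.elim v (fun l => (-ζ⁻¹) ^ m l * conj (v l)))
          (pderiv (Sum.inl i) (pderiv (Sum.inr j) P))).det = 0 ↔
      (Matrix.of fun i j : Fin n =>
          eval (Sum.elim (fun l => (1 - ζ) ^ m l * v l)
              (fun l => (1 - conj ζ) ^ m l * conj (v l)))
            (pderiv (Sum.inl i) (pderiv (Sum.inr j) P))).det = 0 := by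
  have hζ0 : ζ ≠ 0 := norm_ne_zero_iff.mp (by rw [hζ]; exact one_ne_zero)
  set e : Fin n ⊕ Fin n → ℂ := Sum.elim v fun l => (-ζ⁻¹) ^ m l * conj (v l)
  set A : Matrix (Fin n) (Fin n) ℂ :=
    .of fun i j => eval e (pderiv (Sum.inl i) (pderiv (Sum.inr j) P))
  have hPw : P.IsWeightedHomogeneous (Sum.elim m m) d := fun J hJ =>
    (Finsupp.weight_sumElim m J).trans (hP J (mem_support_iff.mpr hJ)).1
  have hdisc : Sum.elim (fun l => (1 - ζ) ^ m l * v l) (fun l => (1 - conj ζ) ^ m l * conj (v l))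
      = fun s => (1 - ζ) ^ Sum.elim m m s * e s := by
    funext s
    rcases s with l | l
    · rfl
    · rw [Sum.elim_inr, Complex.one_sub_conj_eq_of_norm_eq_one hζ, mul_pow, mul_assoc]
      rfl
  have hentries : ∀ i j, eval (fun s => (1 - ζ) ^ Sum.elim m m s * e s)
      (pderiv (Sum.inl i) (pderiv (Sum.inr j) P)) = (1 - ζ) ^ (d - m j - m i) * A i j := by
    intro i j
    have hij := hmd i j
    exact ((hPw.pderiv (n' := d - m j) (by simp; omega)).pderiv
      (n' := d - m j - m i) (by simp; omega)).eval_pow_weight_mul _ _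
  calc _ ↔ A.det = 0 := by
        change (ζ ^ k0 • A).det = 0 ↔ _
        rw [Matrix.det_smul, mul_eq_zero]
        simp [hζ0]
    _ ↔ _ := by
        simp only [hdisc, hentries]
        exact (Matrix.det_of_pow_tsub_mul_eq_zero_iff (sub_ne_zero.mpr hζ1.symm) hmd A).symm

/-- assuming `m i + m j ≤ d` for all `i, j`, for every `ζ ≠ 1` on the unit
circle, `det (ζ^k₀ · P_{z_i w_j}(v, (-ζ⁻¹)^M conj v)) = 0` if and only if
`det (P_{z_i w_j}(h^v(ζ), conj (h^v(ζ)))) = 0`. -/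
theorem stmt14 (n : ℕ) (hn : 1 ≤ n) (m : Fin n → ℕ) (hm : ∀ i, 0 < m i)
    (d k0 : ℕ) (hdk0 : d ≤ 2 * k0) (hk0d : k0 < d)
    (P : MvPolynomial (Fin n ⊕ Fin n) ℂ)
    (hP : ∀ J ∈ P.support,
      ((∑ i, m i * J (Sum.inl i)) + (∑ i, m i * J (Sum.inr i)) = d ∧
        d - k0 ≤ ∑ i, m i * J (Sum.inr i) ∧ (∑ i, m i * J (Sum.inr i)) ≤ k0))
    (hmd : ∀ i j : Fin n, m i + m j ≤ d) (v : Fin n → ℂ)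
    (ζ : ℂ) (hζ : ‖ζ‖ = 1) (hζ1 : ζ ≠ 1) :
    (Matrix.of fun i j : Fin n =>
        ζ ^ k0 * eval (Sum.elim v (fun l => (-ζ⁻¹) ^ m l * conj (v l)))
          (pderiv (Sum.inl i) (pderiv (Sum.inr j) P))).det = 0 ↔
      (Matrix.of fun i j : Fin n =>
          eval (Sum.elim (fun l => (1 - ζ) ^ m l * v l)
              (fun l => (1 - conj ζ) ^ m l * conj (v l)))
            (pderiv (Sum.inl i) (pderiv (Sum.inr j) P))).det = 0 :=
  stmt14_general n m d k0 P hP hmd v ζ hζ hζ1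
end
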